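/- There exists a positive integer c, depending only on C1, C2, s0, ε0, r, q and m, such that for every k ≥ k0, every n ≥ c·φ_k, every n-optimal set α_n ∈ C_{n,r}(μ) and every Voronoi partition (P_a(α_n))_{a∈α_n}: if σ ∈ Ω_k, a ∈ α_n and P_a(α_n) ∩ A_σ ≠ ∅, then d(a, c_σ) ≤ (13/2)·m^{-k}. -/

import Mathlib

open MeasureTheory Metric Set

noncomputable section

variable {E : Type*} [NormedAddCommGroup E] [NormedSpace ℝ E]
  [MeasurableSpace E] [BorelSpace E]

/-- The (topological) support of a Borel measure: the set of points all of whose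
neighborhoods have positive measure. -/
def msupp (μ : Measure E) : Set E := {x | ∀ ε : ℝ, 0 < ε → 0 < μ (ball x ε)}

/-- The set of achievable quantization integrals `∫ d(x,α)^r dν` over sets `α` with
`1 ≤ card α ≤ n`. -/
def quantSet (ν : Measure E) (r : ℝ) (n : ℕ) : Set ℝ :=
  {I | ∃ α : Finset E, α.Nonempty ∧ α.card ≤ n ∧ I = ∫ x, infDist x (α : Set E) ^ r ∂ν}

/-- The `n`-th quantization error of order `r`, raised to the power `r`:
`e_{n,r}(ν)^r = inf { ∫ d(x,α)^r dν : 1 ≤ card α ≤ n }`. -/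
def quantErrPow (ν : Measure E) (r : ℝ) (n : ℕ) : ℝ := sInf (quantSet ν r n)

/-- `α` is an `n`-optimal set for `ν` of order `r`. -/
def IsOptimalSet (ν : Measure E) (r : ℝ) (n : ℕ) (α : Finset E) : Prop :=
  α.Nonempty ∧ α.card ≤ n ∧ (∫ x, infDist x (α : Set E) ^ r ∂ν) = quantErrPow ν r n

/-- `P` is a Voronoi partition (into Borel sets) with respect to the finite set `α`. -/
def IsVoronoiPartition (α : Finset E) (P : E → Set E) : Prop :=
  (∀ a ∈ α, MeasurableSet (P a)) ∧
  ((⋃ a ∈ α, P a) = univ) ∧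
  (∀ a ∈ α, ∀ b ∈ α, a ≠ b → Disjoint (P a) (P b)) ∧
  (∀ a ∈ α, {x | dist x a < infDist x ((α : Set E) \ {a})} ⊆ P a) ∧
  (∀ a ∈ α, P a ⊆ {x | dist x a = infDist x (α : Set E)})

/-- `I_a(α,ν) = ∫_{P_a(α)} d(x,α)^r dν`. -/
def voronoiI (ν : Measure E) (r : ℝ) (α : Finset E) (P : E → Set E) (a : E) : ℝ :=
  ∫ x in P a, infDist x (α : Set E) ^ r ∂ν

/-- `μ` is `s0`-dimensional Ahlfors–David regular with constants `ε0, C1, C2`, together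
with the global upper bound (valid for all centers and radii). -/
def IsAhlfors (μ : Measure E) (s0 ε0 C1 C2 : ℝ) : Prop :=
  0 < s0 ∧ 0 < ε0 ∧ 0 < C1 ∧ 0 < C2 ∧
  (∀ x ∈ msupp μ, ∀ ε : ℝ, 0 < ε → ε < ε0 →
    ENNReal.ofReal (C1 * ε ^ s0) ≤ μ (closedBall x ε) ∧
    μ (closedBall x ε) ≤ ENNReal.ofReal (C2 * ε ^ s0)) ∧
  (∀ x : E, ∀ ε : ℝ, 0 < ε → μ (closedBall x ε) ≤ ENNReal.ofReal (C2 * ε ^ s0))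

/-- `h` is a similitude of ratio `ρ`. -/
def IsSimilitude (h : E → E) (ρ : ℝ) : Prop :=
  Function.Surjective h ∧ ∀ x y, dist (h x) (h y) = ρ * dist x y

/-- The measure `λ_B = μ(·|B) ∘ h`, i.e. `λ_B(A) = μ(h(A) ∩ B)/μ(B)`. -/
def condPull (μ : Measure E) (B : Set E) (h : E → E) : Measure E :=
  Measure.comap h (ProbabilityTheory.cond μ B)

/-- There exist `j` pairwise disjoint closed balls of radius `ρ` centered in `K`. -/
def PackingNum (K : Set E) (ρ : ℝ) (j : ℕ) : Prop :=
  ∃ c : Fin j → E, (∀ i, c i ∈ K) ∧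
    Pairwise fun i i' => Disjoint (closedBall (c i) ρ) (closedBall (c i') ρ)

end

/-!
Write `δ = m^{-k}`. By maximality of the packing, the balls `B(c_σ, 2δ)` cover `supp μ`, so
`φ_k · C₂ (2δ)^{s₀} ≥ 1`, while each `B(c_σ, δ)` carries mass at least `C₁ δ^{s₀}`. The heart of
the proof is that every center lies within `5δ/2` of an optimal set `α`. Otherwise let `c_σ` be the
center farthest from `α`, at distance `M > 5δ/2`. At most `φ_k` points of `α` are nearest to some
center, so among the remaining ones, of which there are at least `(c - 1) φ_k`, one point `b` has a
Voronoi cell of mass at most `1 / ((c - 1) φ_k)`. Replacing `b` by `c_σ` gains at least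
`((M - δ)^r - δ^r) μ(B(c_σ, δ))` on `B(c_σ, δ)` and loses at most `(M + 2δ)^r μ(P_b)` on the
cell of `b`, since each point of the support lies within `2δ + M` of the point of `α` nearest to
some center. Comparing the two contradicts optimality once `c` is large. (If `card α < n`, simply adding `c_σ`
already improves `α`.) Given the `5δ/2` bound, a point `x ∈ P_a ∩ B(c_σ, 2δ)` yields
`d(a, c_σ) ≤ d(a, x) + d(x, c_σ) ≤ (2δ + 5δ/2) + 2δ`.
-/

open scoped ENNReal

lemma exchange_inequality {r δ M Q v : ℝ} (hr : 0 < r) (hδ : 0 < δ) (hM : 5 / 2 * δ < M)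
    (hv : 0 ≤ v) (h : ((M - δ) ^ r - δ ^ r) * Q ≤ (M + 2 * δ) ^ r * v) :
    ((3 / 5) ^ r - (2 / 5) ^ r) * Q ≤ (9 / 5) ^ r * v := by
  have hM0 : 0 < M := by linarith
  have hγ : 0 ≤ (3 / 5 : ℝ) ^ r - (2 / 5) ^ r :=
    sub_nonneg.2 (Real.rpow_le_rpow (by norm_num) (by norm_num) hr.le)
  have hgain : 0 < (M - δ) ^ r - δ ^ r := sub_pos.2 (Real.rpow_lt_rpow hδ.le (by linarith) hr)
  have hup : (M + 2 * δ) ^ r ≤ (9 / 5) ^ r * M ^ r := by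
    rw [← Real.mul_rpow (by norm_num) hM0.le]
    exact Real.rpow_le_rpow (by linarith) (by linarith) hr.le
  have hlow : ((3 / 5) ^ r - (2 / 5) ^ r) * M ^ r ≤ (M - δ) ^ r - δ ^ r := by
    rw [sub_mul, ← Real.mul_rpow (by norm_num) hM0.le, ← Real.mul_rpow (by norm_num) hM0.le]
    gcongr <;> linarith
  refine le_of_mul_le_mul_left ?_ hgain
  calc ((M - δ) ^ r - δ ^ r) * (((3 / 5) ^ r - (2 / 5) ^ r) * Q)
      = ((3 / 5) ^ r - (2 / 5) ^ r) * (((M - δ) ^ r - δ ^ r) * Q) := by ring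
    _ ≤ ((3 / 5) ^ r - (2 / 5) ^ r) * ((9 / 5) ^ r * M ^ r * v) :=
        mul_le_mul_of_nonneg_left (h.trans (mul_le_mul_of_nonneg_right hup hv)) hγ
    _ = (9 / 5) ^ r * (((3 / 5) ^ r - (2 / 5) ^ r) * M ^ r) * v := by ring
    _ ≤ (9 / 5) ^ r * ((M - δ) ^ r - δ ^ r) * v := by gcongr
    _ = ((M - δ) ^ r - δ ^ r) * ((9 / 5) ^ r * v) := by ring

/-- `(9/5)^r / ((3/5)^r - (2/5)^r)` bounds loss over gain in an exchange (`exchange_inequality`),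
and `C2 * 2 ^ s0 / C1` bounds the mass ratio of `closedBall c (2 * δ)` to `closedBall c δ`. -/
noncomputable def exchangeConst (r s0 C1 C2 : ℝ) : ℝ :=
  (9 / 5) ^ r * (C2 * 2 ^ s0) / (((3 / 5) ^ r - (2 / 5) ^ r) * C1)

lemma exchangeConst_nonneg {r s0 C1 C2 : ℝ} (hr : 0 < r) (hC1 : 0 ≤ C1) (hC2 : 0 ≤ C2) :
    0 ≤ exchangeConst r s0 C1 C2 := by
  have : (2 / 5 : ℝ) ^ r ≤ (3 / 5) ^ r := Real.rpow_le_rpow (by norm_num) (by norm_num) hr.le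
  unfold exchangeConst
  exact div_nonneg (by positivity) (mul_nonneg (by linarith) hC1)

lemma le_exchangeConst {r s0 C1 C2 δ Q v : ℝ} {j κ : ℕ} (hr : 0 < r) (hC1 : 0 < C1)
    (hC2 : 0 ≤ C2) (hδ : 0 < δ) (hj : 1 ≤ j * (C2 * (2 * δ) ^ s0)) (hQ : C1 * δ ^ s0 ≤ Q)
    (hQv : ((3 / 5) ^ r - (2 / 5) ^ r) * Q ≤ (9 / 5) ^ r * v) (hv : κ * j * v ≤ 1) :
    (κ : ℝ) ≤ exchangeConst r s0 C1 C2 := by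
  set γ := (3 / 5 : ℝ) ^ r - (2 / 5) ^ r
  have hγ : 0 < γ := sub_pos.2 (Real.rpow_lt_rpow (by norm_num) (by norm_num) hr)
  rw [Real.mul_rpow zero_le_two hδ.le] at hj
  rw [exchangeConst, le_div_iff₀ (mul_pos hγ hC1)]
  calc (κ : ℝ) * (γ * C1) ≤ κ * (γ * C1) * (j * (C2 * (2 ^ s0 * δ ^ s0))) :=
        le_mul_of_one_le_right (by positivity) hj
    _ = C2 * 2 ^ s0 * (κ * j) * (γ * (C1 * δ ^ s0)) := by ring
    _ ≤ C2 * 2 ^ s0 * (κ * j) * ((9 / 5) ^ r * v) :=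
        mul_le_mul_of_nonneg_left ((mul_le_mul_of_nonneg_left hQ hγ.le).trans hQv) (by positivity)
    _ = (9 / 5) ^ r * (C2 * 2 ^ s0) * (κ * j * v) := by ring
    _ ≤ (9 / 5) ^ r * (C2 * 2 ^ s0) := mul_le_of_le_one_right (by positivity) hv

lemma infDist_rpow_le_of_mem_closedBall {X : Type*} [PseudoMetricSpace X] {s t : Set X}
    {x₀ x : X} {δ r : ℝ} (hr : 0 ≤ r) (hx₀ : x₀ ∈ t) (hx : x ∈ closedBall x₀ δ)
    (hδ : δ ≤ infDist x₀ s - δ) :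
    infDist x t ^ r ≤ infDist x s ^ r - ((infDist x₀ s - δ) ^ r - δ ^ r) := by
  have hδ₀ : 0 ≤ δ := dist_nonneg.trans hx
  have hnear : infDist x t ^ r ≤ δ ^ r :=
    Real.rpow_le_rpow infDist_nonneg ((infDist_le_dist_of_mem hx₀).trans hx) hr
  have hfar : (infDist x₀ s - δ) ^ r ≤ infDist x s ^ r := by
    refine Real.rpow_le_rpow (by linarith) ?_ hr
    linarith [infDist_le_infDist_add_dist (s := s) (x := x₀) (y := x), dist_comm x₀ x,
      mem_closedBall.1 hx]
  linarith

section

variable {E : Type*} [NormedAddCommGroup E]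

lemma exists_dist_le_two_mul_of_maximal_packing {K : Set E} {ρ : ℝ} {j : ℕ}
    (hj : j ∈ upperBounds {j | PackingNum K ρ j}) {c : Fin j → E} (hcK : ∀ i, c i ∈ K)
    (hc : Pairwise fun i i' ↦ Disjoint (closedBall (c i) ρ) (closedBall (c i') ρ))
    {y : E} (hy : y ∈ K) : ∃ i, dist y (c i) ≤ 2 * ρ := by
  by_contra! hfar
  have hyc (i : Fin j) : Disjoint (closedBall y ρ) (closedBall (c i) ρ) :=
    closedBall_disjoint_closedBall (by linarith [hfar i])
  have hpack : PackingNum K ρ (j + 1) := by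
    refine ⟨Fin.cons y c, Fin.cases hy hcK, ?_⟩
    intro i i' h
    cases i using Fin.cases <;> cases i' using Fin.cases
    · exact absurd rfl h
    · simpa using hyc _
    · simpa using (hyc _).symm
    · simpa using hc (by simpa using h)
  exact (hj hpack).not_gt j.lt_succ_self

variable [MeasurableSpace E]

lemma msupp_eq_support (μ : Measure E) : msupp μ = μ.support := by
  ext x
  simp only [msupp, mem_ofPred_eq, Measure.mem_support_iff_forall]
  exact ⟨fun h U hU ↦ let ⟨ε, hε, hεU⟩ := nhds_basis_ball.mem_iff.1 hU
    (h ε hε).trans_le (measure_mono hεU), fun h ε hε ↦ h _ (ball_mem_nhds x hε)⟩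

lemma ae_mem_msupp [HereditarilyLindelofSpace E] (μ : Measure E) : ∀ᵐ x ∂μ, x ∈ msupp μ := by
  rw [msupp_eq_support]
  exact Measure.support_mem_ae

lemma integrable_infDist_rpow [OpensMeasurableSpace E] (μ : Measure E) [IsFiniteMeasure μ]
    {S s : Set E} (hS : Bornology.IsBounded S) (hSμ : ∀ᵐ x ∂μ, x ∈ S) (hs : s.Nonempty)
    {r : ℝ} (hr : 0 ≤ r) :
    Integrable (fun x ↦ infDist x s ^ r) μ := by
  obtain ⟨b, hb⟩ := hs
  obtain ⟨R, hR⟩ := hS.subset_closedBall b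
  refine Integrable.of_bound (C := R ^ r)
    ((continuous_infDist_pt s).rpow_const fun _ ↦ Or.inr hr).aestronglyMeasurable ?_
  filter_upwards [hSμ] with x hx
  rw [Real.norm_of_nonneg (Real.rpow_nonneg infDist_nonneg r)]
  exact Real.rpow_le_rpow infDist_nonneg ((infDist_le_dist_of_mem hb).trans (hR hx)) hr

lemma one_le_mul_of_ae_covered (μ : Measure E) [IsProbabilityMeasure μ] {j : ℕ} (c : Fin j → E)
    {R b : ℝ} (hcov : ∀ᵐ x ∂μ, ∃ i, dist x (c i) ≤ R)
    (hb : ∀ i, μ (closedBall (c i) R) ≤ ENNReal.ofReal b) :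
    1 ≤ j * b := by
  have hunion : μ univ ≤ μ (⋃ i, closedBall (c i) R) :=
    measure_mono_ae (hcov.mono fun x ⟨i, hi⟩ _ ↦ mem_iUnion.2 ⟨i, hi⟩)
  have : (1 : ℝ≥0∞) ≤ ENNReal.ofReal (j * b) :=
    calc (1 : ℝ≥0∞) = μ univ := measure_univ.symm
      _ ≤ ∑ i, μ (closedBall (c i) R) := hunion.trans (measure_iUnion_fintype_le μ _)
      _ ≤ ∑ _i : Fin j, ENNReal.ofReal b := Finset.sum_le_sum fun i _ ↦ hb i
      _ = ENNReal.ofReal (j * b) := by simp [ENNReal.ofReal_mul]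
  exact ENNReal.one_le_ofReal.1 this

lemma quantErrPow_le_integral (μ : Measure E) (r : ℝ) {n : ℕ} {β : Finset E}
    (hβ : β.Nonempty) (hβn : β.card ≤ n) :
    quantErrPow μ r n ≤ ∫ x, infDist x (β : Set E) ^ r ∂μ := by
  refine csInf_le ⟨0, ?_⟩ ⟨β, hβ, hβn, rfl⟩
  rintro _ ⟨γ, -, -, rfl⟩
  exact integral_nonneg fun x ↦ Real.rpow_nonneg infDist_nonneg r

namespace IsVoronoiPartition

variable {α : Finset E} {P : E → Set E}

lemma dist_le (hP : IsVoronoiPartition α P) {a x : E} (ha : a ∈ α) (hx : x ∈ P a) (y : E) :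
    dist a y ≤ 2 * dist x y + infDist y α := by
  have hxa : dist x a = infDist x α := hP.2.2.2.2 a ha hx
  linarith [dist_triangle a x y, dist_comm a x, infDist_le_infDist_add_dist (s := (α : Set E))
    (x := x) (y := y)]

lemma infDist_le_of_notMem (hP : IsVoronoiPartition α P) {b x : E} (hx : x ∉ P b) {s : Set E}
    (hs : ∀ t ∈ α, t ≠ b → t ∈ s) : infDist x s ≤ infDist x α := by
  obtain ⟨t, ht, hxt⟩ := mem_iUnion₂.1 (hP.2.1.symm ▸ mem_univ x)
  rw [← hP.2.2.2.2 t ht hxt]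
  exact infDist_le_dist_of_mem (hs t ht fun htb ↦ hx (htb ▸ hxt))

lemma sum_measureReal (hP : IsVoronoiPartition α P) (μ : Measure E) [IsFiniteMeasure μ] :
    ∑ a ∈ α, μ.real (P a) = μ.real univ := by
  obtain ⟨hmeas, hcover, hdisj, -⟩ := hP
  rw [← hcover, measureReal_biUnion_finset (fun a ha b hb hab ↦ hdisj a ha b hb hab) hmeas]

lemma exists_card_mul_measureReal_le_one (hP : IsVoronoiPartition α P) (μ : Measure E)
    [IsProbabilityMeasure μ] {A : Finset E} (hA : A ⊆ α) (hAne : A.Nonempty) :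
    ∃ b ∈ A, A.card * μ.real (P b) ≤ 1 := by
  obtain ⟨b, hbA, hmin⟩ := A.exists_min_image (fun a ↦ μ.real (P a)) hAne
  refine ⟨b, hbA, ?_⟩
  calc A.card * μ.real (P b) ≤ ∑ a ∈ A, μ.real (P a) := by
        simpa using Finset.card_nsmul_le_sum A _ _ hmin
    _ ≤ ∑ a ∈ α, μ.real (P a) := Finset.sum_le_sum_of_subset_of_nonneg hA fun _ _ _ ↦ by positivity
    _ = 1 := by rw [hP.sum_measureReal, probReal_univ]

end IsVoronoiPartition

namespace IsOptimalSet

variable [OpensMeasurableSpace E] {μ : Measure E} {r : ℝ} {n : ℕ} {α β : Finset E}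

lemma integral_nonneg_of_ae_le (hα : IsOptimalSet μ r n α) (hr : 0 ≤ r)
    (hβ : β.Nonempty) (hβn : β.card ≤ n)
    (hαi : Integrable (fun x ↦ infDist x (α : Set E) ^ r) μ) {g : E → ℝ} (hg : Integrable g μ)
    (hle : ∀ᵐ x ∂μ, infDist x (β : Set E) ^ r ≤ infDist x (α : Set E) ^ r + g x) :
    0 ≤ ∫ x, g x ∂μ := by
  have hβi : Integrable (fun x ↦ infDist x (β : Set E) ^ r) μ := by
    refine (hαi.add hg).mono'
      ((continuous_infDist_pt _).rpow_const fun _ ↦ Or.inr hr).aestronglyMeasurable ?_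
    filter_upwards [hle] with x hx
    rwa [Real.norm_of_nonneg (Real.rpow_nonneg infDist_nonneg r)]
  have hopt : ∫ x, infDist x (α : Set E) ^ r ∂μ ≤ ∫ x, infDist x (β : Set E) ^ r ∂μ :=
    hα.2.2 ▸ quantErrPow_le_integral μ r hβ hβn
  have hcmp : ∫ x, infDist x (β : Set E) ^ r ∂μ
      ≤ ∫ x, (infDist x (α : Set E) ^ r + g x) ∂μ := integral_mono_ae hβi (hαi.add hg) hle
  rw [integral_add hαi hg] at hcmp
  linarith

variable [IsFiniteMeasure μ]

lemma infDist_le_two_mul_of_card_lt (hα : IsOptimalSet μ r n α) (hr : 0 < r)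
    (hcard : α.card < n) (hαi : Integrable (fun x ↦ infDist x (α : Set E) ^ r) μ)
    {x₀ : E} {δ : ℝ} (hB : 0 < μ.real (closedBall x₀ δ)) :
    infDist x₀ α ≤ 2 * δ := by
  classical
  by_contra! hfar
  have hδ : 0 ≤ δ := by
    by_contra! h
    simp [closedBall_eq_empty.2 h] at hB
  set gain := (infDist x₀ α - δ) ^ r - δ ^ r
  have hgain : 0 < gain := sub_pos.2 (Real.rpow_lt_rpow hδ (by linarith) hr)
  set B := closedBall x₀ δ
  have hle : ∀ x, infDist x (insert x₀ α : Finset E) ^ r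
      ≤ infDist x (α : Set E) ^ r + -B.indicator (fun _ ↦ gain) x := by
    intro x
    by_cases hx : x ∈ B
    · rw [indicator_of_mem hx, ← sub_eq_add_neg]
      exact infDist_rpow_le_of_mem_closedBall hr.le (by simp) hx (by linarith)
    · rw [indicator_of_notMem hx, neg_zero, add_zero]
      refine Real.rpow_le_rpow infDist_nonneg (infDist_le_infDist_of_subset ?_ ?_) hr.le
      · simp [subset_insert]
      · exact Finset.coe_nonempty.2 hα.1
  have hint := hα.integral_nonneg_of_ae_le (g := fun x ↦ -B.indicator (fun _ ↦ gain) x) hr.le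
    (Finset.insert_nonempty x₀ α) ((Finset.card_insert_le x₀ α).trans hcard) hαi
    ((integrable_const gain).indicator measurableSet_closedBall).neg (ae_of_all _ hle)
  rw [integral_neg, integral_indicator_const _ measurableSet_closedBall, smul_eq_mul] at hint
  nlinarith

/-- The exchange argument: trade `b ∈ α` for `x₀`. On `closedBall x₀ δ` each point gains at least
the amount on the left; losses are confined to the cell of `b`, where every point has another
element of `α` within distance `L`. -/
lemma mul_measureReal_closedBall_le (hα : IsOptimalSet μ r n α) (hr : 0 ≤ r)
    (hαi : Integrable (fun x ↦ infDist x (α : Set E) ^ r) μ) {P : E → Set E}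
    (hP : IsVoronoiPartition α P) {b x₀ : E} (hb : b ∈ α) {δ L : ℝ} (hδ : δ ≤ infDist x₀ α - δ)
    (hL : 0 ≤ L) (hPb : ∀ᵐ x ∂μ, x ∈ P b → ∃ t ∈ α, t ≠ b ∧ dist x t ≤ L) :
    ((infDist x₀ α - δ) ^ r - δ ^ r) * μ.real (closedBall x₀ δ) ≤ L ^ r * μ.real (P b) := by
  classical
  set gain := (infDist x₀ α - δ) ^ r - δ ^ r
  set B := closedBall x₀ δ
  set β := insert x₀ (α.erase b)
  have hβ : ∀ t ∈ α, t ≠ b → t ∈ (β : Set E) := by simp +contextual [β]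
  have hβn : β.card ≤ n := by
    have := Finset.card_erase_add_one hb
    linarith [Finset.card_insert_le x₀ (α.erase b), hα.2.1]
  have hcell : ∀ᵐ x ∂μ, infDist x (β : Set E) ^ r
      ≤ infDist x (α : Set E) ^ r + (P b).indicator (fun _ ↦ L ^ r) x := by
    filter_upwards [hPb] with x hx
    by_cases hxb : x ∈ P b
    · obtain ⟨t, ht, htb, hxt⟩ := hx hxb
      rw [indicator_of_mem hxb]
      have := Real.rpow_le_rpow infDist_nonneg ((infDist_le_dist_of_mem (hβ t ht htb)).trans hxt) hr
      linarith [Real.rpow_nonneg (infDist_nonneg (x := x) (s := (α : Set E))) r]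
    · rw [indicator_of_notMem hxb, add_zero]
      exact Real.rpow_le_rpow infDist_nonneg (hP.infDist_le_of_notMem hxb hβ) hr
  have hle : ∀ᵐ x ∂μ, infDist x (β : Set E) ^ r ≤ infDist x (α : Set E) ^ r
      + ((P b).indicator (fun _ ↦ L ^ r) x - B.indicator (fun _ ↦ gain) x) := by
    filter_upwards [hcell] with x hx
    by_cases hxB : x ∈ B
    · rw [indicator_of_mem hxB]
      have := infDist_rpow_le_of_mem_closedBall (t := β) hr
        (Finset.mem_coe.2 (Finset.mem_insert_self _ _)) hxB hδ
      have : 0 ≤ (P b).indicator (fun _ ↦ L ^ r) x :=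
        indicator_nonneg (fun _ _ ↦ Real.rpow_nonneg hL r) x
      linarith
    · rwa [indicator_of_notMem hxB, sub_zero]
  have hint := hα.integral_nonneg_of_ae_le hr (Finset.insert_nonempty _ _) hβn hαi
    (((integrable_const _).indicator (hP.1 b hb)).sub
      ((integrable_const _).indicator measurableSet_closedBall)) hle
  rw [Pi.sub_def, integral_sub ((integrable_const _).indicator (hP.1 b hb))
      ((integrable_const _).indicator measurableSet_closedBall),
    integral_indicator_const _ (hP.1 b hb), integral_indicator_const _ measurableSet_closedBall,
    smul_eq_mul, smul_eq_mul] at hint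
  linarith

variable [IsProbabilityMeasure μ] {s0 C1 C2 δ : ℝ} {j κ : ℕ} {P : E → Set E}

lemma infDist_le_of_cover_of_le_card (hα : IsOptimalSet μ r n α) (hr : 0 < r)
    (hαi : Integrable (fun x ↦ infDist x (α : Set E) ^ r) μ) (hP : IsVoronoiPartition α P)
    (hC1 : 0 < C1) (hC2 : 0 ≤ C2) (hδ : 0 < δ) (c : Fin j → E)
    (hcov : ∀ᵐ x ∂μ, ∃ i, dist x (c i) ≤ 2 * δ)
    (hmass : ∀ i, C1 * δ ^ s0 ≤ μ.real (closedBall (c i) δ))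
    (hj : 1 ≤ j * (C2 * (2 * δ) ^ s0)) (hκ : exchangeConst r s0 C1 C2 < κ)
    (hcard : (κ + 1) * j ≤ α.card) (i : Fin j) :
    infDist (c i) α ≤ 5 / 2 * δ := by
  classical
  by_contra! hfar
  obtain ⟨i₀, -, hi₀⟩ := Finset.univ.exists_max_image (fun i ↦ infDist (c i) α) ⟨i, by simp⟩
  set M := infDist (c i₀) α
  have hM : 5 / 2 * δ < M := hfar.trans_le (hi₀ i (by simp))
  choose near hnearα hnear using fun i ↦
    α.finite_toSet.isCompact.exists_infDist_eq_dist (Finset.coe_nonempty.2 hα.1) (c i)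
  set A := α \ Finset.univ.image near
  have hAcard : κ * j ≤ A.card := by
    have : α.card - (Finset.univ.image near).card ≤ A.card := Finset.le_card_sdiff _ _
    have := (Finset.card_image_le (s := Finset.univ) (f := near)).trans_eq (Finset.card_fin j)
    rw [add_one_mul] at hcard
    omega
  have hκ0 : 0 < κ := by exact_mod_cast (exchangeConst_nonneg hr hC1.le hC2).trans_lt hκ
  have hAne : A.Nonempty := Finset.card_pos.1 <| (Nat.mul_pos hκ0 (Fin.pos i)).trans_le hAcard
  obtain ⟨b, hbA, hbv⟩ := hP.exists_card_mul_measureReal_le_one μ Finset.sdiff_subset hAne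
  obtain ⟨hbα, hbnear⟩ := Finset.mem_sdiff.1 hbA
  have hPb : ∀ᵐ x ∂μ, x ∈ P b → ∃ t ∈ α, t ≠ b ∧ dist x t ≤ M + 2 * δ := by
    filter_upwards [hcov] with x ⟨τ, hτ⟩ _
    refine ⟨near τ, hnearα τ, fun h ↦ hbnear (h ▸ Finset.mem_image_of_mem _ (by simp)), ?_⟩
    linarith [dist_triangle x (c τ) (near τ), hnear τ, hi₀ τ (by simp)]
  have hexch := hα.mul_measureReal_closedBall_le hr.le hαi hP hbα (x₀ := c i₀) (δ := δ)
    (by linarith) (by linarith) hPb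
  have hv : κ * j * μ.real (P b) ≤ 1 :=
    (mul_le_mul_of_nonneg_right (by exact_mod_cast hAcard) measureReal_nonneg).trans hbv
  exact (le_exchangeConst hr hC1 hC2 hδ hj (hmass i₀)
    (exchange_inequality hr hδ hM measureReal_nonneg hexch) hv).not_gt hκ

lemma infDist_le_of_cover (hα : IsOptimalSet μ r n α) (hr : 0 < r)
    (hαi : Integrable (fun x ↦ infDist x (α : Set E) ^ r) μ) (hP : IsVoronoiPartition α P)
    (hC1 : 0 < C1) (hC2 : 0 ≤ C2) (hδ : 0 < δ) (c : Fin j → E)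
    (hcov : ∀ᵐ x ∂μ, ∃ i, dist x (c i) ≤ 2 * δ)
    (hmass : ∀ i, C1 * δ ^ s0 ≤ μ.real (closedBall (c i) δ))
    (hj : 1 ≤ j * (C2 * (2 * δ) ^ s0)) (hκ : exchangeConst r s0 C1 C2 < κ)
    (hn : (κ + 1) * j ≤ n) (i : Fin j) :
    infDist (c i) α ≤ 5 / 2 * δ := by
  rcases hα.2.1.lt_or_eq with hlt | rfl
  · have hB : 0 < μ.real (closedBall (c i) δ) :=
      (by positivity : 0 < C1 * δ ^ s0).trans_le (hmass i)
    linarith [hα.infDist_le_two_mul_of_card_lt hr hlt hαi hB]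
  · exact hα.infDist_le_of_cover_of_le_card hr hαi hP hC1 hC2 hδ c hcov hmass hj hκ hn i

end IsOptimalSet

end

theorem stmt14_general {E : Type*} [NormedAddCommGroup E] [NormedSpace ℝ E]
    [MeasurableSpace E] [BorelSpace E] [FiniteDimensional ℝ E]
    (r : ℝ) (hr : 0 < r)
    (μ : MeasureTheory.Measure E) [MeasureTheory.IsProbabilityMeasure μ]
    (s0 ε0 C1 C2 : ℝ) (hμ : IsAhlfors μ s0 ε0 C1 C2)
    (m : ℕ) (hm : 2 ≤ m) (k0 : ℕ)
    (hk0 : 2 * ((m : ℝ) ^ k0)⁻¹ < ε0)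
    (φ : ℕ → ℕ)
    (hφ : ∀ k, k0 ≤ k →
      IsGreatest {j | PackingNum (msupp μ) (((m : ℝ) ^ k)⁻¹) j} (φ k))
    (ctr : (k : ℕ) → Fin (φ k) → E)
    (hctr : ∀ k, k0 ≤ k → (∀ i, ctr k i ∈ msupp μ) ∧
      Pairwise fun i i' => Disjoint (Metric.closedBall (ctr k i) (((m : ℝ) ^ k)⁻¹))
        (Metric.closedBall (ctr k i') (((m : ℝ) ^ k)⁻¹))) :
    ∃ c : ℕ, 0 < c ∧
      ∀ k, k0 ≤ k → ∀ n : ℕ, c * φ k ≤ n → ∀ α : Finset E, IsOptimalSet μ r n α →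
        ∀ P : E → Set E, IsVoronoiPartition α P →
          ∀ σ : Fin (φ k), ∀ a ∈ α,
            (P a ∩ Metric.closedBall (ctr k σ) (2 * ((m : ℝ) ^ k)⁻¹)).Nonempty →
            dist a (ctr k σ) ≤ (13 / 2 : ℝ) * ((m : ℝ) ^ k)⁻¹ := by
  obtain ⟨-, -, hC1, hC2, hreg, hglob⟩ := hμ
  set κ := ⌈exchangeConst r s0 C1 C2⌉₊ + 1
  have hκ : exchangeConst r s0 C1 C2 < κ := by
    push_cast [κ]
    linarith [Nat.le_ceil (exchangeConst r s0 C1 C2)]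
  refine ⟨κ + 1, κ.succ_pos, fun k hk n hn α hα P hP σ a ha ⟨x, hxP, hxB⟩ ↦ ?_⟩
  set δ := ((m : ℝ) ^ k)⁻¹
  have hm1 : (1 : ℝ) ≤ m := by exact_mod_cast one_le_two.trans hm
  have hδ : 0 < δ := by positivity
  have hδε : δ < ε0 := by
    have : δ ≤ ((m : ℝ) ^ k0)⁻¹ := inv_anti₀ (by positivity) (pow_le_pow_right₀ hm1 hk)
    linarith
  obtain ⟨hctrK, hctrdisj⟩ := hctr k hk
  have hcov (y : E) (hy : y ∈ msupp μ) : ∃ τ, dist y (ctr k τ) ≤ 2 * δ :=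
    exists_dist_le_two_mul_of_maximal_packing (hφ k hk).2 hctrK hctrdisj hy
  have hbdd : Bornology.IsBounded (msupp μ) :=
    (Bornology.isBounded_iUnion.2 fun τ ↦ isBounded_closedBall (x := ctr k τ) (r := 2 * δ)).subset
      fun y hy ↦ mem_iUnion.2 (hcov y hy)
  have hαi := integrable_infDist_rpow μ hbdd (ae_mem_msupp μ) (Finset.coe_nonempty.2 hα.1) hr.le
  have hmass (τ : Fin (φ k)) : C1 * δ ^ s0 ≤ μ.real (closedBall (ctr k τ) δ) :=
    (ENNReal.ofReal_le_iff_le_toReal (measure_ne_top _ _)).1 (hreg _ (hctrK τ) δ hδ hδε).1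
  have hcov_ae := (ae_mem_msupp μ).mono hcov
  have hj := one_le_mul_of_ae_covered μ (ctr k) hcov_ae fun τ ↦ hglob _ (2 * δ) (by positivity)
  have hkey := hα.infDist_le_of_cover hr hαi hP hC1 hC2.le hδ (ctr k) hcov_ae hmass hj hκ hn σ
  linarith [hP.dist_le ha hxP (ctr k σ), mem_closedBall.1 hxB]

/-- There is a positive integer `c` such that for every `k ≥ k0`, every
`n ≥ c·φ_k`, every `n`-optimal set `α` and every Voronoi partition `P`: if `σ ∈ Ω_k`, `a ∈ α`
and `P_a(α) ∩ A_σ ≠ ∅`, then `d(a,c_σ) ≤ (13/2)·m^{-k}`. -/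
theorem stmt14 {E : Type*} [NormedAddCommGroup E] [NormedSpace ℝ E]
    [MeasurableSpace E] [BorelSpace E] [FiniteDimensional ℝ E]
    (r : ℝ) (hr : 0 < r)
    (μ : MeasureTheory.Measure E) [MeasureTheory.IsProbabilityMeasure μ]
    (s0 ε0 C1 C2 : ℝ) (hμ : IsAhlfors μ s0 ε0 C1 C2)
    (m : ℕ) (hm : 2 ≤ m) (k0 : ℕ)
    (hk0 : 2 * ((m : ℝ) ^ k0)⁻¹ < ε0)
    (hk0min : ∀ j : ℕ, 2 * ((m : ℝ) ^ j)⁻¹ < ε0 → k0 ≤ j)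
    (φ : ℕ → ℕ)
    (hφ : ∀ k, k0 ≤ k →
      IsGreatest {j | PackingNum (msupp μ) (((m : ℝ) ^ k)⁻¹) j} (φ k))
    (ctr : (k : ℕ) → Fin (φ k) → E)
    (hctr : ∀ k, k0 ≤ k → (∀ i, ctr k i ∈ msupp μ) ∧
      Pairwise fun i i' => Disjoint (Metric.closedBall (ctr k i) (((m : ℝ) ^ k)⁻¹))
        (Metric.closedBall (ctr k i') (((m : ℝ) ^ k)⁻¹))) :
    ∃ c : ℕ, 0 < c ∧
      ∀ k, k0 ≤ k → ∀ n : ℕ, c * φ k ≤ n → ∀ α : Finset E, IsOptimalSet μ r n α →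
        ∀ P : E → Set E, IsVoronoiPartition α P →
          ∀ σ : Fin (φ k), ∀ a ∈ α,
            (P a ∩ Metric.closedBall (ctr k σ) (2 * ((m : ℝ) ^ k)⁻¹)).Nonempty →
            dist a (ctr k σ) ≤ (13 / 2 : ℝ) * ((m : ℝ) ^ k)⁻¹ :=
  stmt14_general r hr μ s0 ε0 C1 C2 hμ m hm k0 hk0 φ hφ ctr hctr
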